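/- For every s ∈ (0,1) and every p ∈ Xₛ at which fₛ is defined, fₛ is also defined at −p and fₛ(−p) = −fₛ(p). That is, fₛ commutes with the rotation ι(x,y) = (−x,−y). -/

import Mathlib

open Set

noncomputable section OctaPET

/-- Rotation by `π/2` about the origin in `ℝ²`. -/
def Jrot (p : ℝ × ℝ) : ℝ × ℝ := (-p.2, p.1)

/-- The closed parallelogram `F₁(s)` centered at the origin, spanned by `(2,0)` and `(2s,2s)`. -/
def F1 (s : ℝ) : Set (ℝ × ℝ) :=
  {p | ∃ a b : ℝ, a ∈ Icc (-(1/2) : ℝ) (1/2) ∧ b ∈ Icc (-(1/2) : ℝ) (1/2) ∧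
    p = a • ((2 : ℝ), (0 : ℝ)) + b • ((2*s : ℝ), (2*s : ℝ))}

/-- `F₂(s) = J(F₁(s))`. -/
def F2 (s : ℝ) : Set (ℝ × ℝ) := Jrot '' F1 s

/-- The lattice `L₁(s)`, generated by `(2,0)` and `(2s,−2s)`. -/
def L1 (s : ℝ) : AddSubgroup (ℝ × ℝ) :=
  AddSubgroup.closure {((2 : ℝ), (0 : ℝ)), ((2*s : ℝ), (-(2*s) : ℝ))}

/-- The lattice `L₂(s)`, generated by `(0,2)` and `(2s,2s)`. -/
def L2 (s : ℝ) : AddSubgroup (ℝ × ℝ) :=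
  AddSubgroup.closure {((0 : ℝ), (2 : ℝ)), ((2*s : ℝ), (2*s : ℝ))}

/-- The partial map `f′ₛ` as a relation: `step s p q` holds iff `f′ₛ` is defined at `p`
with value `q`.  For `p ∈ F_j(s)`, `f′ₛ(p) = p + V` where `V` is the *unique* vector of
`L_{3−j}(s)` with `p + V ∈ F_{3−j}(s)`. -/
def step (s : ℝ) (p q : ℝ × ℝ) : Prop :=
  (p ∈ F1 s ∧ (∃! V, V ∈ L2 s ∧ p + V ∈ F2 s) ∧ q - p ∈ L2 s ∧ q ∈ F2 s) ∨
  (p ∈ F2 s ∧ (∃! V, V ∈ L1 s ∧ p + V ∈ F1 s) ∧ q - p ∈ L1 s ∧ q ∈ F1 s)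

/-- The map `fₛ = (f′ₛ)²`, as a relation: `fRel s p q` holds iff `fₛ` is defined at `p`
with value `q`. -/
def fRel (s : ℝ) (p q : ℝ × ℝ) : Prop := ∃ r, step s p r ∧ step s r q

end OctaPET

/- The rotation `ι = -id` preserves both parallelograms and both lattices, so it conjugates each
of the two halves of `f′ₛ` to itself, uniqueness of the translation vector included. -/

lemma existsUnique_mem_neg_add {G : Type*} [AddCommGroup G] {L : AddSubgroup G} {F : Set G}
    (hF : ∀ x ∈ F, -x ∈ F) {p : G} (h : ∃! V, V ∈ L ∧ p + V ∈ F) :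
    ∃! V, V ∈ L ∧ -p + V ∈ F := by
  have neg_mem_F_iff : ∀ x, -x ∈ F ↔ x ∈ F := fun x => ⟨fun hx => neg_neg x ▸ hF _ hx, hF x⟩
  refine ((Equiv.neg G).existsUnique_congr fun {V} => ?_).1 h
  rw [Equiv.neg_apply, ← neg_add, neg_mem_F_iff, neg_mem_iff]

lemma neg_mem_F1 {s : ℝ} {p : ℝ × ℝ} (hp : p ∈ F1 s) : -p ∈ F1 s := by
  obtain ⟨a, b, ⟨ha₁, ha₂⟩, ⟨hb₁, hb₂⟩, rfl⟩ := hp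
  exact ⟨-a, -b, ⟨by linarith, by linarith⟩, ⟨by linarith, by linarith⟩,
    by rw [neg_add, neg_smul, neg_smul]⟩

lemma Jrot_neg (p : ℝ × ℝ) : Jrot (-p) = -Jrot p := rfl

lemma neg_mem_F2 {s : ℝ} {p : ℝ × ℝ} (hp : p ∈ F2 s) : -p ∈ F2 s := by
  obtain ⟨x, hx, rfl⟩ := hp
  exact ⟨-x, neg_mem_F1 hx, Jrot_neg x⟩

lemma step_neg {s : ℝ} {p q : ℝ × ℝ} (h : step s p q) : step s (-p) (-q) := by
  have neg_sub_neg_mem {L : AddSubgroup (ℝ × ℝ)} (hpq : q - p ∈ L) : -q - -p ∈ L := by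
    rw [neg_sub_neg, ← neg_sub]
    exact neg_mem hpq
  rcases h with ⟨hp, hV, hpq, hq⟩ | ⟨hp, hV, hpq, hq⟩
  · exact Or.inl ⟨neg_mem_F1 hp, existsUnique_mem_neg_add (fun _ => neg_mem_F2) hV,
      neg_sub_neg_mem hpq, neg_mem_F2 hq⟩
  · exact Or.inr ⟨neg_mem_F2 hp, existsUnique_mem_neg_add (fun _ => neg_mem_F1) hV,
      neg_sub_neg_mem hpq, neg_mem_F1 hq⟩

theorem f_commutes_with_rotation (s : ℝ)
    (p q : ℝ × ℝ) (hpq : fRel s p q) :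
    fRel s (-p) (-q) := by
  obtain ⟨r, hpr, hrq⟩ := hpq
  exact ⟨-r, step_neg hpr, step_neg hrq⟩
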